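/- arXiv:1803.11113 — 5 statements merged into one kernel-verified Lean document; each statement's English description precedes it below -/
import Mathlib

section
/- Let $x_1 \geq x_2 \geq 0$ and $0 < \alpha \leq \beta \leq x_2$ with $\alpha x_2 - \beta x_1 - \alpha\beta < 0$. Then $(\sqrt{x_1} + \sqrt{x_2})^2 - (\sqrt{x_1 + \alpha} + \sqrt{x_2 - \beta})^2 = -\alpha + \beta + 2\sqrt{x_1 x_2} - 2\sqrt{x_1 x_2 + \alpha x_2 - \beta x_1 - \alpha\beta} > 0$, hence $\sqrt{x_1} + \sqrt{x_2} > \sqrt{x_1+\alpha} + \sqrt{x_2-\beta}$. -/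
theorem stmt_1 (x1 x2 α β : ℝ) (hx : x2 ≤ x1) (hx2 : 0 ≤ x2)
    (hα : 0 < α) (hαβ : α ≤ β) (hβx2 : β ≤ x2)
    (hkey : α * x2 - β * x1 - α * β < 0) :
    ((Real.sqrt x1 + Real.sqrt x2) ^ 2 - (Real.sqrt (x1 + α) + Real.sqrt (x2 - β)) ^ 2
      = -α + β + 2 * Real.sqrt (x1 * x2)
        - 2 * Real.sqrt (x1 * x2 + α * x2 - β * x1 - α * β)) ∧
    (0 < (Real.sqrt x1 + Real.sqrt x2) ^ 2 - (Real.sqrt (x1 + α) + Real.sqrt (x2 - β)) ^ 2) ∧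
    Real.sqrt (x1 + α) + Real.sqrt (x2 - β) < Real.sqrt x1 + Real.sqrt x2 := by
  have hx1 : (0:ℝ) ≤ x1 := le_trans hx2 hx
  have hx1a : (0:ℝ) ≤ x1 + α := by linarith
  have hx2b : (0:ℝ) ≤ x2 - β := by linarith
  have hprod : (x1 + α) * (x2 - β) = x1 * x2 + α * x2 - β * x1 - α * β := by ring
  have heq : (Real.sqrt x1 + Real.sqrt x2) ^ 2 - (Real.sqrt (x1 + α) + Real.sqrt (x2 - β)) ^ 2
      = -α + β + 2 * Real.sqrt (x1 * x2)
        - 2 * Real.sqrt (x1 * x2 + α * x2 - β * x1 - α * β) := by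
    rw [add_sq, add_sq, Real.sq_sqrt hx1, Real.sq_sqrt hx2, Real.sq_sqrt hx1a,
      Real.sq_sqrt hx2b, mul_assoc, mul_assoc, ← Real.sqrt_mul hx1, ← Real.sqrt_mul hx1a, hprod]
    ring
  have hlt : Real.sqrt (x1 * x2 + α * x2 - β * x1 - α * β) < Real.sqrt (x1 * x2) := by
    apply Real.sqrt_lt_sqrt
    · rw [← hprod]; exact mul_nonneg hx1a hx2b
    · linarith
  have hpos : 0 < (Real.sqrt x1 + Real.sqrt x2) ^ 2 - (Real.sqrt (x1 + α) + Real.sqrt (x2 - β)) ^ 2 := by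
    rw [heq]; linarith
  refine ⟨heq, hpos, ?_⟩
  have hB : 0 ≤ Real.sqrt (x1 + α) + Real.sqrt (x2 - β) :=
    add_nonneg (Real.sqrt_nonneg _) (Real.sqrt_nonneg _)
  have := lt_of_pow_lt_pow_left₀ 2 (add_nonneg (Real.sqrt_nonneg x1) (Real.sqrt_nonneg x2))
    (by linarith : (Real.sqrt (x1 + α) + Real.sqrt (x2 - β)) ^ 2 < (Real.sqrt x1 + Real.sqrt x2) ^ 2)
  exact this
end

section
/- Let $r, T, W, \sigma^2 > 0$, $C \geq 0$, and $h > 0$. Define on $(0,T]$ the function $E(t) = \frac{t}{h}\sqrt{\theta(t) - C}$ where $\theta(t) = (2^{rT/(tW)}-1)\sigma^2$, restricted to $t$ with $\theta(t) > C$. If $(2^{rT/(tW)} - 2)\sigma^2 - 2C < 0$ throughout an interval $I \subseteq \{t : \theta(t) > C\}$, then $E''(t) < 0$ on $I$, so $E$ is strictly concave on $I$; and if $(2^{rT/(tW)} - 2)\sigma^2 - 2C > 0$ throughout $I$, then $E$ is strictly convex on $I$. -/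
noncomputable def Gf (a : ℝ) (t : ℝ) : ℝ := (2:ℝ) ^ (a / t)
noncomputable def Sf (a σ2 C : ℝ) (t : ℝ) : ℝ := Real.sqrt (σ2 * Gf a t - (σ2 + C))
noncomputable def E1f (a σ2 C hm : ℝ) (t : ℝ) : ℝ :=
  (Sf a σ2 C t - Real.log 2 * a * σ2 * Gf a t / (2 * t * Sf a σ2 C t)) / hm
noncomputable def E2f (a σ2 C hm : ℝ) (t : ℝ) : ℝ :=
  (Real.log 2 * a * σ2 * Gf a t) / (4 * hm * t ^ 3 * Sf a σ2 C t ^ 3) *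
    (Real.log 2 * a * ((Gf a t - 2) * σ2 - 2 * C))

lemma hasDerivAt_Gf (a : ℝ) {t : ℝ} (ht : 0 < t) :
    HasDerivAt (Gf a) (Gf a t * Real.log 2 * (-a / t ^ 2)) t := by
  have hq : HasDerivAt (fun t : ℝ => a / t) (-a / t ^ 2) t := by
    simpa using (hasDerivAt_const t a).fun_div (hasDerivAt_id t) ht.ne'
  unfold Gf
  simpa [Gf, mul_comm, mul_assoc, Function.comp_def] using
    ((Real.hasStrictDerivAt_const_rpow two_pos (a / t)).hasDerivAt.comp t hq)

lemma hasDerivAt_Sf (a σ2 C : ℝ) {t : ℝ} (ht : 0 < t)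
    (hf : 0 < σ2 * Gf a t - (σ2 + C)) :
    HasDerivAt (Sf a σ2 C)
      (σ2 * (Gf a t * Real.log 2 * (-a / t ^ 2)) / (2 * Sf a σ2 C t)) t := by
  have hF : HasDerivAt (fun t => σ2 * Gf a t - (σ2 + C))
      (σ2 * (Gf a t * Real.log 2 * (-a / t ^ 2))) t := by
    simpa using ((hasDerivAt_Gf a ht).const_mul σ2).fun_sub (hasDerivAt_const t (σ2 + C))
  exact hF.sqrt hf.ne'

lemma Sf_pos (a σ2 C : ℝ) {t : ℝ} (hf : 0 < σ2 * Gf a t - (σ2 + C)) :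
    0 < Sf a σ2 C t := Real.sqrt_pos.mpr hf

lemma Sf_sq (a σ2 C : ℝ) {t : ℝ} (hf : 0 < σ2 * Gf a t - (σ2 + C)) :
    Sf a σ2 C t ^ 2 = σ2 * Gf a t - (σ2 + C) := Real.sq_sqrt hf.le

lemma hasDerivAt_E (a σ2 C hm : ℝ) (hhm : 0 < hm) {t : ℝ} (ht : 0 < t)
    (hf : 0 < σ2 * Gf a t - (σ2 + C)) :
    HasDerivAt (fun t => t / hm * Sf a σ2 C t) (E1f a σ2 C hm t) t := by
  have h1 := ((hasDerivAt_id t).div_const hm).fun_mul (hasDerivAt_Sf a σ2 C ht hf)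
  have hS := Sf_pos a σ2 C hf
  refine h1.congr_deriv (Eq.symm ?_)
  unfold E1f id
  field_simp
  ring

lemma hasDerivAt_E1 (a σ2 C hm : ℝ) (hhm : 0 < hm) {t : ℝ} (ht : 0 < t)
    (hf : 0 < σ2 * Gf a t - (σ2 + C)) :
    HasDerivAt (E1f a σ2 C hm) (E2f a σ2 C hm t) t := by
  have hS := Sf_pos a σ2 C hf
  have hS2 := Sf_sq a σ2 C hf
  have hsd := hasDerivAt_Sf a σ2 C ht hf
  have hgd := hasDerivAt_Gf a ht
  have hden : HasDerivAt (fun t => 2 * t * Sf a σ2 C t)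
      (2 * Sf a σ2 C t + 2 * t * (σ2 * (Gf a t * Real.log 2 * (-a / t ^ 2)) / (2 * Sf a σ2 C t))) t := by
    simpa [mul_assoc] using (((hasDerivAt_id t).const_mul 2).fun_mul hsd)
  have hnum : HasDerivAt (fun t => Real.log 2 * a * σ2 * Gf a t)
      (Real.log 2 * a * σ2 * (Gf a t * Real.log 2 * (-a / t ^ 2))) t :=
    hgd.const_mul _
  have hdz : 2 * t * Sf a σ2 C t ≠ 0 := by positivity
  have hq := hnum.fun_div hden hdz
  have h1 := (hsd.fun_sub hq).div_const hm
  refine h1.congr_deriv (Eq.symm ?_)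
  unfold E2f
  set S := Sf a σ2 C t
  set G := Gf a t
  set L := Real.log 2
  field_simp
  linear_combination (-8 * Real.log 2 ^ 2 * a ^ 2 * σ2 * G) * hS2

theorem stmt_7 (r T W σ2 C hm : ℝ) (hr : 0 < r) (hT : 0 < T) (hW : 0 < W)
    (hσ2 : 0 < σ2) (hC : 0 ≤ C) (hhm : 0 < hm)
    (θ E : ℝ → ℝ)
    (hθ : ∀ t, θ t = ((2 : ℝ) ^ (r * T / (t * W)) - 1) * σ2)
    (hE : ∀ t, E t = t / hm * Real.sqrt (θ t - C))
    (I : Set ℝ) (hIconv : Convex ℝ I)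
    (hI : I ⊆ {t : ℝ | 0 < t ∧ t ≤ T ∧ C < θ t}) :
    ((∀ t ∈ I, ((2 : ℝ) ^ (r * T / (t * W)) - 2) * σ2 - 2 * C < 0) →
      (∀ t ∈ I, deriv (deriv E) t < 0) ∧ StrictConcaveOn ℝ I E) ∧
    ((∀ t ∈ I, 0 < ((2 : ℝ) ^ (r * T / (t * W)) - 2) * σ2 - 2 * C) →
      StrictConvexOn ℝ I E) := by
  set a := r * T / W with ha_def
  have ha : 0 < a := by positivity
  have hL : 0 < Real.log 2 := Real.log_pos one_lt_two
  have hexp : ∀ t : ℝ, r * T / (t * W) = a / t := by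
    intro t; rw [ha_def, div_div, mul_comm W t]
  have hfθ : ∀ t, θ t - C = σ2 * Gf a t - (σ2 + C) := by
    intro t; rw [hθ t, hexp t]; unfold Gf; ring
  have hEeq : E = fun t => t / hm * Sf a σ2 C t := by
    funext t; rw [hE t]; unfold Sf; rw [hfθ t]
  set U : Set ℝ := {t : ℝ | 0 < t ∧ 0 < σ2 * Gf a t - (σ2 + C)} with hU_def
  have hIU : I ⊆ U := by
    intro t htI
    obtain ⟨ht0, -, hCt⟩ := hI htI
    refine ⟨ht0, ?_⟩
    rw [← hfθ t]; linarith
  have hUopen : IsOpen U := by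
    rw [isOpen_iff_mem_nhds]
    rintro t ⟨ht0, htf⟩
    have hc : ContinuousAt (fun y => σ2 * Gf a y - (σ2 + C)) t :=
      (continuousAt_const.mul (hasDerivAt_Gf a ht0).continuousAt).sub continuousAt_const
    have h1 : {y : ℝ | 0 < y} ∈ nhds t := isOpen_Ioi.mem_nhds ht0
    have h2 : (fun y => σ2 * Gf a y - (σ2 + C)) ⁻¹' Set.Ioi 0 ∈ nhds t :=
      hc.preimage_mem_nhds (isOpen_Ioi.mem_nhds htf)
    filter_upwards [h1, h2] with y hy1 hy2 using ⟨hy1, hy2⟩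
  have hDE : ∀ t ∈ U, HasDerivAt E (E1f a σ2 C hm t) t := by
    intro t ht; rw [hEeq]; exact hasDerivAt_E a σ2 C hm hhm ht.1 ht.2
  have hD2 : ∀ t ∈ U, deriv (deriv E) t = E2f a σ2 C hm t := by
    intro t htU
    have hev : deriv E =ᶠ[nhds t] E1f a σ2 C hm :=
      Filter.eventuallyEq_of_mem (hUopen.mem_nhds htU) (fun y hy => (hDE y hy).deriv)
    rw [hev.deriv_eq]
    exact (hasDerivAt_E1 a σ2 C hm hhm htU.1 htU.2).deriv
  have hPpos : ∀ t ∈ U, 0 <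
      (Real.log 2 * a * σ2 * Gf a t) / (4 * hm * t ^ 3 * Sf a σ2 C t ^ 3) := by
    intro t htU
    have hG : 0 < Gf a t := Real.rpow_pos_of_pos two_pos _
    have hS := Sf_pos a σ2 C htU.2
    have ht0 := htU.1
    positivity
  have hcont : ContinuousOn E I := fun x hx =>
    ((hDE x (hIU hx)).differentiableAt.continuousAt).continuousWithinAt
  have hit : ∀ x : ℝ, (deriv^[2] E) x = deriv (deriv E) x := by
    intro x
    simp [Function.iterate_succ, Function.iterate_zero, Function.comp]
  constructor
  · intro hneg
    have hkey : ∀ t ∈ I, deriv (deriv E) t < 0 := by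
      intro t htI
      have htU := hIU htI
      rw [hD2 t htU]
      unfold E2f
      have hv : (Gf a t - 2) * σ2 - 2 * C < 0 := by
        have := hneg t htI; rw [hexp t] at this; exact this
      exact mul_neg_of_pos_of_neg (hPpos t htU)
        (mul_neg_of_pos_of_neg (by positivity) hv)
    refine ⟨hkey, strictConcaveOn_of_deriv2_neg hIconv hcont ?_⟩
    intro x hx
    rw [hit x]
    exact hkey x (interior_subset hx)
  · intro hpos
    refine strictConvexOn_of_deriv2_pos hIconv hcont ?_
    intro x hx
    have hxI := interior_subset hx
    have hxU := hIU hxI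
    rw [hit x, hD2 x hxU]
    unfold E2f
    have hv : 0 < (Gf a x - 2) * σ2 - 2 * C := by
      have := hpos x hxI; rw [hexp x] at this; exact this
    exact mul_pos (hPpos x hxU) (mul_pos (by positivity) hv)
end

section
/- Let $\kappa_1 \geq \kappa_2 \geq \cdots \geq \kappa_n > 0$, $P > 0$, $\theta > 0$ with $\sum_{i=1}^{m-1} P^2\kappa_i^2 < \theta \leq \sum_{i=1}^m P^2\kappa_i^2$ for some $m \leq n$. Consider vectors $x \in [0, P^2]^n$ satisfying $\sum_{i=1}^n x_i \kappa_i^2 = \theta$. Then the vector $x^*$ with $x^*_i = P^2$ for $i < m$, $x^*_m = (\theta - \sum_{i=1}^{m-1}P^2\kappa_i^2)/\kappa_m^2$, and $x^*_i = 0$ for $i > m$, is feasible and minimizes $\sum_{i=1}^n \sqrt{x_i}$ over all such feasible $x$. -/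
/-! With `u i = √(x i) ∈ [0, P]` and `w i = κ i ^ 2`, the cost is `∑ u i` and the constraint is
`∑ u i ^ 2 * w i = θ`. For antitone weights, a budget `∑ u i ≤ k * P + s` with `0 ≤ s ≤ P` buys at
most the weighted mass `P ^ 2 * (w 0 + ⋯ + w (k - 1)) + s ^ 2 * w k` of the greedy allocation. This
is proved by induction on the number of coordinates, peeling off `u 0`: the tail gets the budget
`k * P + (s - u 0)` if `u 0 ≤ s` and `(k - 1) * P + (P + s - u 0)` otherwise, and in both cases the
mass lost is made up because `w 0` dominates the later weights. A cost below `k * P + √(x* k)`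
therefore cannot reach `θ`. -/

open Finset

theorem sum_sq_mul_le_of_sum_le {c : ℝ} (n : ℕ) {w u : ℕ → ℝ} (hw : Antitone w)
    (hw0 : ∀ i, 0 ≤ w i) (hu : ∀ i < n, 0 ≤ u i ∧ u i ≤ c) {k : ℕ} {s : ℝ} (hs0 : 0 ≤ s)
    (hsc : s ≤ c) (hsum : ∑ i ∈ range n, u i ≤ k * c + s) :
    ∑ i ∈ range n, u i ^ 2 * w i ≤ c ^ 2 * ∑ i ∈ range k, w i + s ^ 2 * w k := by
  induction n generalizing w u k s with
  | zero =>
    rw [sum_range_zero]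
    exact add_nonneg (mul_nonneg (sq_nonneg c) (sum_nonneg fun i _ => hw0 i))
      (mul_nonneg (sq_nonneg s) (hw0 k))
  | succ n ih =>
    have hw' : Antitone (fun i => w (i + 1)) := fun i j h => hw (by omega)
    have hu' : ∀ i < n, 0 ≤ u (i + 1) ∧ u (i + 1) ≤ c := fun i hi => hu (i + 1) (by omega)
    obtain ⟨hu0, hu0c⟩ := hu 0 n.succ_pos
    have htail : 0 ≤ ∑ i ∈ range n, u (i + 1) := sum_nonneg fun i hi => (hu' i (mem_range.1 hi)).1
    have hshift : ∀ j, ∑ i ∈ range j, w (i + 1) = ∑ i ∈ range j, w i + w j - w 0 := fun j => by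
      rw [← sum_range_succ, sum_range_succ']; ring
    rw [sum_range_succ'] at hsum ⊢
    have hc2 : 0 ≤ c ^ 2 - u 0 ^ 2 := by nlinarith
    by_cases hs : u 0 ≤ s
    · have hrest := ih hw' (fun i => hw0 _) hu' (k := k) (by linarith : 0 ≤ s - u 0) (by linarith)
        (by linarith)
      rw [hshift] at hrest
      nlinarith [mul_le_mul_of_nonneg_left (hw k.le_succ) (sq_nonneg (s - u 0)),
        mul_le_mul_of_nonneg_left (hw k.zero_le) hc2,
        mul_nonneg (mul_nonneg hu0 (sub_nonneg.2 hs)) (hw0 k)]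
    · obtain ⟨k, rfl⟩ : ∃ k', k = k' + 1 := Nat.exists_eq_succ_of_ne_zero (by
        rintro rfl; push_cast at hsum; linarith)
      have hrest := ih hw' (fun i => hw0 _) hu' (k := k) (by linarith : 0 ≤ c + s - u 0) (by linarith)
        (by push_cast at hsum; linarith)
      rw [hshift] at hrest
      rw [sum_range_succ]
      nlinarith [mul_le_mul_of_nonneg_left (hw (k + 1).zero_le) hc2,
        mul_nonneg (mul_nonneg (sub_nonneg.2 hu0c) (by linarith : 0 ≤ u 0 - s)) (hw0 (k + 1))]

theorem le_sum_of_le_sum_sq_mul {n : ℕ} {w u : ℕ → ℝ} (hw : AntitoneOn w (Set.Iio n))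
    (hw0 : ∀ i < n, 0 ≤ w i) {c : ℝ} (hu : ∀ i < n, 0 ≤ u i ∧ u i ≤ c) {k : ℕ} (hkn : k < n)
    (hwk : 0 < w k) {s : ℝ} (hs0 : 0 < s) (hsc : s ≤ c)
    (h : c ^ 2 * ∑ i ∈ range k, w i + s ^ 2 * w k ≤ ∑ i ∈ range n, u i ^ 2 * w i) :
    k * c + s ≤ ∑ i ∈ range n, u i := by
  set w' : ℕ → ℝ := fun i => if i < n then w i else 0
  have hw' : Antitone w' := fun i j hij => by
    dsimp only [w']
    split_ifs with hj hi hi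
    · exact hw hi hj hij
    · omega
    · exact hw0 i hi
    · rfl
  have hw'0 : ∀ i, 0 ≤ w' i := fun i => by dsimp only [w']; split_ifs with hi <;> simp [hw0, hi]
  have hww' : ∀ i < n, w' i = w i := fun i hi => if_pos hi
  by_contra! hlt
  set s' := max (∑ i ∈ range n, u i - k * c) 0
  have hs' : s' < s := max_lt (by linarith) hs0
  have hle := sum_sq_mul_le_of_sum_le n hw' hw'0 hu (le_max_right _ _) (by linarith)
    (by linarith [le_max_left (∑ i ∈ range n, u i - k * c) 0])
  rw [hww' k hkn, sum_congr rfl fun i hi => hww' i ((mem_range.1 hi).trans hkn),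
    sum_congr rfl fun i hi => by rw [hww' i (mem_range.1 hi)]] at hle
  nlinarith [mul_lt_mul_of_pos_right (pow_lt_pow_left₀ hs' (le_max_right _ _) two_ne_zero) hwk]

theorem sum_range_eq_sum_range_add_of_eq_zero {M : Type*} [AddCommMonoid M] {f : ℕ → M}
    {k n : ℕ} (hkn : k < n) (hf : ∀ i, k < i → i < n → f i = 0) :
    ∑ i ∈ range n, f i = ∑ i ∈ range k, f i + f k := by
  rw [← sum_range_succ, eq_comm]
  refine sum_subset (range_subset_range.2 hkn) fun i hi hi' => hf i ?_ ?_
  · simp only [mem_range, not_lt] at hi'; omega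
  · exact mem_range.1 hi

theorem stmt_14_general (n m : ℕ) (κ : ℕ → ℝ) (P θ : ℝ)
    (hκpos : ∀ i < n, 0 < κ i)
    (hκsorted : ∀ i j, i ≤ j → j < n → κ j ≤ κ i)
    (hP : 0 < P) (hm1 : 1 ≤ m) (hmn : m ≤ n)
    (hlow : (∑ i ∈ Finset.range (m - 1), P ^ 2 * κ i ^ 2) < θ)
    (hhigh : θ ≤ ∑ i ∈ Finset.range m, P ^ 2 * κ i ^ 2)
    (xstar : ℕ → ℝ)
    (hxstar : ∀ i, xstar i =
      if i < m - 1 then P ^ 2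
      else if i = m - 1 then
        (θ - ∑ j ∈ Finset.range (m - 1), P ^ 2 * κ j ^ 2) / κ (m - 1) ^ 2
      else 0) :
    (∀ i < n, 0 ≤ xstar i ∧ xstar i ≤ P ^ 2) ∧
    (∑ i ∈ Finset.range n, xstar i * κ i ^ 2 = θ) ∧
    (∀ x : ℕ → ℝ, (∀ i < n, 0 ≤ x i ∧ x i ≤ P ^ 2) →
      (∑ i ∈ Finset.range n, x i * κ i ^ 2 = θ) →
      (∑ i ∈ Finset.range n, Real.sqrt (xstar i)) ≤
        ∑ i ∈ Finset.range n, Real.sqrt (x i)) := by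
  obtain ⟨k, rfl⟩ : ∃ k, m = k + 1 := ⟨m - 1, by omega⟩
  simp only [Nat.add_sub_cancel] at hlow hxstar
  rw [sum_range_succ] at hhigh
  have hκk : 0 < κ k := hκpos k hmn
  have hxk : xstar k * κ k ^ 2 = θ - ∑ i ∈ range k, P ^ 2 * κ i ^ 2 := by
    rw [hxstar, if_neg (lt_irrefl k), if_pos rfl, div_mul_cancel₀ _ (by positivity)]
  have hxk0 : 0 < xstar k := pos_of_mul_pos_left (by linarith) (sq_nonneg (κ k))
  have hxkP : xstar k ≤ P ^ 2 :=
    le_of_mul_le_mul_right (by rw [hxk]; linarith) (by positivity : 0 < κ k ^ 2)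
  have hxlt : ∀ i < k, xstar i = P ^ 2 := fun i hi => by rw [hxstar, if_pos hi]
  have hxgt : ∀ i, k < i → xstar i = 0 := fun i hi => by
    rw [hxstar, if_neg (by omega), if_neg (by omega)]
  have hcost : ∑ i ∈ range n, √(xstar i) = k * P + √(xstar k) := by
    rw [sum_range_eq_sum_range_add_of_eq_zero hmn fun i hi _ => by rw [hxgt i hi, Real.sqrt_zero],
      sum_congr rfl fun i hi => by rw [hxlt i (mem_range.1 hi), Real.sqrt_sq hP.le]]
    simp
  refine ⟨fun i _ => ?_, ?_, fun x hx hxθ => ?_⟩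
  · rcases lt_trichotomy i k with hi | rfl | hi
    · rw [hxlt i hi]; exact ⟨sq_nonneg P, le_rfl⟩
    · exact ⟨hxk0.le, hxkP⟩
    · simp [hxgt i hi, hP.le]
  · rw [sum_range_eq_sum_range_add_of_eq_zero hmn fun i hi _ => by rw [hxgt i hi, zero_mul], hxk,
      sum_congr rfl fun i hi => by rw [hxlt i (mem_range.1 hi)]]
    ring
  · rw [hcost]
    refine le_sum_of_le_sum_sq_mul (w := fun i => κ i ^ 2) (u := fun i => √(x i))
      (fun i hi j hj hij => pow_le_pow_left₀ (hκpos j hj).le (hκsorted i j hij hj) 2)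
      (fun i _ => sq_nonneg _) (fun i hi => ⟨Real.sqrt_nonneg _, Real.sqrt_le_iff.2 ⟨hP.le, (hx i hi).2⟩⟩)
      hmn (by positivity) (Real.sqrt_pos.2 hxk0) (Real.sqrt_le_iff.2 ⟨hP.le, hxkP⟩) ?_
    rw [Real.sq_sqrt hxk0.le, mul_sum, hxk, add_sub_cancel, ← hxθ]
    exact (sum_congr rfl fun i hi => by rw [Real.sq_sqrt (hx i (mem_range.1 hi)).1]).ge

theorem stmt_14 (n m : ℕ) (κ : ℕ → ℝ) (P θ : ℝ)
    (hκpos : ∀ i < n, 0 < κ i)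
    (hκsorted : ∀ i j, i ≤ j → j < n → κ j ≤ κ i)
    (hP : 0 < P) (hθ : 0 < θ) (hm1 : 1 ≤ m) (hmn : m ≤ n)
    (hlow : (∑ i ∈ Finset.range (m - 1), P ^ 2 * κ i ^ 2) < θ)
    (hhigh : θ ≤ ∑ i ∈ Finset.range m, P ^ 2 * κ i ^ 2)
    (xstar : ℕ → ℝ)
    (hxstar : ∀ i, xstar i =
      if i < m - 1 then P ^ 2
      else if i = m - 1 then
        (θ - ∑ j ∈ Finset.range (m - 1), P ^ 2 * κ j ^ 2) / κ (m - 1) ^ 2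
      else 0) :
    (∀ i < n, 0 ≤ xstar i ∧ xstar i ≤ P ^ 2) ∧
    (∑ i ∈ Finset.range n, xstar i * κ i ^ 2 = θ) ∧
    (∀ x : ℕ → ℝ, (∀ i < n, 0 ≤ x i ∧ x i ≤ P ^ 2) →
      (∑ i ∈ Finset.range n, x i * κ i ^ 2 = θ) →
      (∑ i ∈ Finset.range n, Real.sqrt (xstar i)) ≤
        ∑ i ∈ Finset.range n, Real.sqrt (x i)) :=
  stmt_14_general n m κ P θ hκpos hκsorted hP hm1 hmn hlow hhigh xstar hxstar
end

section
/- Let $\kappa_1 \geq \kappa_2 \geq \cdots \geq \kappa_n > 0$, $P > 0$, and $s > 0$ with $\sum_{i=1}^{m-1} P\kappa_i < s \leq \sum_{i=1}^m P\kappa_i$ for some $m \leq n$. Consider vectors $x \in [0, P^2]^n$ satisfying $\sum_{i=1}^n \sqrt{x_i}\, \kappa_i = s$. Then the vector $x^*$ with $x^*_i = P^2$ for $i < m$, $\sqrt{x^*_m} = (s - \sum_{i=1}^{m-1}P\kappa_i)/\kappa_m$, and $x^*_i = 0$ for $i > m$, is feasible and minimizes $\sum_{i=1}^n \sqrt{x_i}$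 over all such feasible $x$. -/
theorem stmt_15 (n m : ℕ) (κ : ℕ → ℝ) (P s : ℝ)
    (hκpos : ∀ i < n, 0 < κ i)
    (hκsorted : ∀ i j, i ≤ j → j < n → κ j ≤ κ i)
    (hP : 0 < P) (hs : 0 < s) (hm1 : 1 ≤ m) (hmn : m ≤ n)
    (hlow : (∑ i ∈ Finset.range (m - 1), P * κ i) < s)
    (hhigh : s ≤ ∑ i ∈ Finset.range m, P * κ i)
    (xstar : ℕ → ℝ)
    (hxstar : ∀ i, xstar i =
      if i < m - 1 then P ^ 2
      else if i = m - 1 then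
        ((s - ∑ j ∈ Finset.range (m - 1), P * κ j) / κ (m - 1)) ^ 2
      else 0) :
    (∀ i < n, 0 ≤ xstar i ∧ xstar i ≤ P ^ 2) ∧
    (∑ i ∈ Finset.range n, Real.sqrt (xstar i) * κ i = s) ∧
    (∀ x : ℕ → ℝ, (∀ i < n, 0 ≤ x i ∧ x i ≤ P ^ 2) →
      (∑ i ∈ Finset.range n, Real.sqrt (x i) * κ i = s) →
      (∑ i ∈ Finset.range n, Real.sqrt (xstar i)) ≤
        ∑ i ∈ Finset.range n, Real.sqrt (x i)) := by
  obtain ⟨k, rfl⟩ : ∃ k, m = k + 1 := ⟨m - 1, by omega⟩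
  simp only [Nat.add_sub_cancel] at *
  have hkn : k < n := by omega
  have hc : 0 < κ k := hκpos _ hkn
  set S := ∑ j ∈ Finset.range k, P * κ j with hS
  set t := (s - S) / κ k with ht
  have hts : t * κ k = s - S := div_mul_cancel₀ _ (ne_of_gt hc)
  have ht0 : 0 < t := div_pos (by linarith) hc
  have hsum_m : ∑ i ∈ Finset.range (k + 1), P * κ i = S + P * κ k :=
    Finset.sum_range_succ _ _
  have htP : t ≤ P := by
    rw [ht, div_le_iff₀ hc]
    rw [hsum_m] at hhigh
    linarith
  have hg : ∀ i, Real.sqrt (xstar i)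
      = if i < k then P else if i = k then t else 0 := by
    intro i
    rw [hxstar i]
    split_ifs with h1 h2
    · exact Real.sqrt_sq hP.le
    · exact Real.sqrt_sq ht0.le
    · exact Real.sqrt_zero
  have hfeas : ∑ i ∈ Finset.range n, Real.sqrt (xstar i) * κ i = s := by
    have h1 : ∑ i ∈ Finset.range n, Real.sqrt (xstar i) * κ i
        = ∑ i ∈ Finset.range (k + 1), Real.sqrt (xstar i) * κ i := by
      symm
      apply Finset.sum_subset (Finset.range_subset_range.2 hmn)
      intro i _ hi
      simp only [Finset.mem_range, not_lt] at hi
      rw [hg i]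
      have h1 : ¬ i < k := by omega
      have h2 : i ≠ k := by omega
      simp [h1, h2]
    rw [h1, Finset.sum_range_succ]
    have h2 : ∑ i ∈ Finset.range k, Real.sqrt (xstar i) * κ i = S := by
      apply Finset.sum_congr rfl
      intro i hi
      simp only [Finset.mem_range] at hi
      rw [hg i]
      simp [hi]
    rw [h2, hg k]
    rw [if_neg (lt_irrefl k), if_pos rfl]
    linarith [hts]
  refine ⟨?_, hfeas, ?_⟩
  · intro i hi
    rw [hxstar i]
    split_ifs with h1 h2
    · exact ⟨sq_nonneg _, le_refl _⟩
    · exact ⟨sq_nonneg _, by nlinarith⟩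
    · exact ⟨le_refl _, sq_nonneg P⟩
  · intro x hx hfx
    have hy0 : ∀ i, 0 ≤ Real.sqrt (x i) := fun i => Real.sqrt_nonneg _
    have hyP : ∀ i < n, Real.sqrt (x i) ≤ P := by
      intro i hi
      calc Real.sqrt (x i) ≤ Real.sqrt (P ^ 2) := Real.sqrt_le_sqrt (hx i hi).2
        _ = P := Real.sqrt_sq hP.le
    have key : ∀ i ∈ Finset.range n,
        κ k * (Real.sqrt (xstar i) - Real.sqrt (x i))
          ≤ κ i * (Real.sqrt (xstar i) - Real.sqrt (x i)) := by
      intro i hi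
      simp only [Finset.mem_range] at hi
      rw [hg i]
      rcases lt_trichotomy i k with h | h | h
      · have hκ : κ k ≤ κ i := hκsorted i k h.le hkn
        have hdi : 0 ≤ P - Real.sqrt (x i) := by linarith [hyP i hi]
        simp only [if_pos h]
        nlinarith
      · simp [h]
      · have hκ : κ i ≤ κ k := hκsorted k i h.le hi
        have h1 : ¬ i < k := by omega
        have h2 : i ≠ k := by omega
        simp only [if_neg h1, if_neg h2]
        nlinarith [hy0 i]
    have hsum := Finset.sum_le_sum key
    rw [← Finset.mul_sum] at hsum
    have hRHS : ∑ i ∈ Finset.range n,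
        κ i * (Real.sqrt (xstar i) - Real.sqrt (x i)) = 0 := by
      have he : ∀ i, κ i * (Real.sqrt (xstar i) - Real.sqrt (x i))
          = Real.sqrt (xstar i) * κ i - Real.sqrt (x i) * κ i := by
        intro i; ring
      simp_rw [he, Finset.sum_sub_distrib, hfeas, hfx]
      ring
    rw [hRHS, Finset.sum_sub_distrib] at hsum
    nlinarith [hsum]
end

section
/- Let $y_1, \dots, y_n \geq 0$ and $\kappa_1 \geq \cdots \geq \kappa_n > 0$, and suppose $y \in [0, P]^n$ satisfies $\sum_i y_i \kappa_i = s$ where $\sum_{i=1}^{m-1} P\kappa_i < s \leq \sum_{i=1}^{m} P\kappa_i$. Then $\sum_{i=1}^n y_i \geq (m-1)P + (s - \sum_{i=1}^{m-1} P\kappa_i)/\kappa_m$. -/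
theorem stmt_16 (n m : ℕ) (y κ : ℕ → ℝ) (P s : ℝ)
    (hκpos : ∀ i < n, 0 < κ i)
    (hκsorted : ∀ i j, i ≤ j → j < n → κ j ≤ κ i)
    (hP : 0 < P) (hm1 : 1 ≤ m) (hmn : m ≤ n)
    (hy : ∀ i < n, 0 ≤ y i ∧ y i ≤ P)
    (hsum : ∑ i ∈ Finset.range n, y i * κ i = s)
    (hlow : (∑ i ∈ Finset.range (m - 1), P * κ i) < s)
    (hhigh : s ≤ ∑ i ∈ Finset.range m, P * κ i) :
    (m - 1 : ℝ) * P + (s - ∑ i ∈ Finset.range (m - 1), P * κ i) / κ (m - 1) ≤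
      ∑ i ∈ Finset.range n, y i := by
  set k := m - 1 with hk
  have hkn : k < n := lt_of_lt_of_le (Nat.sub_lt hm1 one_pos) hmn
  have hκk : 0 < κ k := hκpos k hkn
  have hcast : (m - 1 : ℝ) = (k : ℝ) := by
    rw [hk, Nat.cast_sub hm1]; simp
  rw [hcast]
  have key : ∑ i ∈ Finset.range k, (P * κ k - P * κ i) ≤
      ∑ i ∈ Finset.range n, (y i * κ k - y i * κ i) := by
    rw [← Finset.sum_range_add_sum_Ico _ (le_of_lt hkn)]
    have h1 : ∑ i ∈ Finset.range k, (P * κ k - P * κ i) ≤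
        ∑ i ∈ Finset.range k, (y i * κ k - y i * κ i) := by
      apply Finset.sum_le_sum
      intro i hi
      have hik : i < k := Finset.mem_range.mp hi
      have hin : i < n := lt_trans hik hkn
      have hκi : κ k ≤ κ i := hκsorted i k (le_of_lt hik) hkn
      have := (hy i hin).2
      nlinarith [(hy i hin).1]
    have h2 : (0:ℝ) ≤ ∑ i ∈ Finset.Ico k n, (y i * κ k - y i * κ i) := by
      apply Finset.sum_nonneg
      intro i hi
      obtain ⟨hki, hin⟩ := Finset.mem_Ico.mp hi
      have hκi : κ i ≤ κ k := hκsorted k i hki hin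
      have := (hy i hin).1
      nlinarith
    linarith
  have key2 : s - ∑ i ∈ Finset.range k, P * κ i ≤
      (∑ i ∈ Finset.range n, y i - (k : ℝ) * P) * κ k := by
    have e1 : ∑ i ∈ Finset.range k, (P * κ k - P * κ i)
        = (k : ℝ) * (P * κ k) - ∑ i ∈ Finset.range k, P * κ i := by
      rw [Finset.sum_sub_distrib, Finset.sum_const, Finset.card_range, nsmul_eq_mul]
    have e2 : ∑ i ∈ Finset.range n, (y i * κ k - y i * κ i)
        = (∑ i ∈ Finset.range n, y i) * κ k - s := by
      rw [Finset.sum_sub_distrib, ← Finset.sum_mul, hsum]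
    rw [e1, e2] at key
    nlinarith
  have := (div_le_iff₀ hκk).mpr key2
  linarith
end
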